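/- Let R_{0,[3]} be the polynomial ring over ℚ, with variables ℝE_{J,K} for {J,K}∈P([3]) and ℝD_{I;J,K} for (I,{J,K})∈P̃•([3]), and I_{0,[3]} ⊂ R_{0,[3]} the corresponding ideal. Then the quotient ℚ-algebra R_{0,[3]}/I_{0,[3]} is isomorphic to ℚ[x₁,x₂,x₃,y₁,y₂,y₃]/I, where I is the ideal generated by the elements x_i·x_j for all i,j∈{1,2,3}, y_i·y_j for all i,j∈{1,2,3}, x_i·y_j for all i,j∈{1,2,3} with i≠j, and the elements x₁y₁−x₂y₂ and x₁y₁−x₃y₃, via an isomorphism sending the classes of ℝE_{{1},{2,3}}, ℝE_{{2},{1,3}}, ℝE_{{3},{1,2}}, ℝD_{{1};{2,3},∅}, ℝD_{{2};{1,3},∅}, ℝD_{{3};{1,2},∅} to the classes of x₁, x₂, x₃, y₁, y₂, y₃ respectively. -/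

import Mathlib

open MvPolynomial Finset TensorProduct

noncomputable section

/-- `[ℓ] = {1, …, ℓ}`. -/
abbrev Iset (n : ℕ) : Finset ℕ := Finset.Icc 1 n

/-! ### The "complex" rings `R_S = R[(D_{J,K})_{{J,K} ∈ P•(S)}]`.
An unordered pair `{J,K}` with `J ⊔ K = S` and `2 ≤ |J| ≤ |S|-2` is represented by
its unique member containing `min S`. -/

/-- Index type for the variables `D_{J,K}`, `{J,K} ∈ P•(S)`: the canonical member
of the pair is the one whose minimum is `min S`. -/
abbrev CxIdx (S : Finset ℕ) : Type :=
  {J : Finset ℕ // J ⊆ S ∧ 2 ≤ J.card ∧ 2 ≤ (S \ J).card ∧ J.min = S.min}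

/-- The polynomial ring `R_S` on the variables `D_{J,K}`, `{J,K} ∈ P•(S)`. -/
abbrev CxRing (R : Type) [CommRing R] (S : Finset ℕ) : Type := MvPolynomial (CxIdx S) R

def cxXv (R : Type) [CommRing R] (S J : Finset ℕ) : CxRing R S :=
  if h : J ⊆ S ∧ 2 ≤ J.card ∧ 2 ≤ (S \ J).card ∧ J.min = S.min then X ⟨J, h⟩ else 0

/-- The variable `D_{J,K}` of `R_S` (equal to `0` if `{J,K} ∉ P•(S)`). -/
def cxD (R : Type) [CommRing R] (S J K : Finset ℕ) : CxRing R S :=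
  if Disjoint J K ∧ J ∪ K = S then (if J.min ≤ K.min then cxXv R S J else cxXv R S K)
  else 0

/-- `{J,K} ⋂̸ {J',K'}`:  `J ⊄ J'`, `J ⊄ K'`, `J' ⊄ J` and `K' ⊄ J`. -/
abbrev NcapCx (J J' K' : Finset ℕ) : Prop :=
  ¬ J ⊆ J' ∧ ¬ J ⊆ K' ∧ ¬ J' ⊆ J ∧ ¬ K' ⊆ J

/-- The element `R^S_{abcd}`. -/
def cxRel (R : Type) [CommRing R] (S : Finset ℕ) (a b c d : ℕ) : CxRing R S :=
  (∑ J ∈ S.powerset,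
    if 2 ≤ J.card ∧ 2 ≤ (S \ J).card ∧ a ∈ J ∧ b ∈ J ∧ c ∈ S \ J ∧ d ∈ S \ J
    then cxD R S J (S \ J) else 0)
  - ∑ J ∈ S.powerset,
    if 2 ≤ J.card ∧ 2 ≤ (S \ J).card ∧ a ∈ J ∧ c ∈ J ∧ b ∈ S \ J ∧ d ∈ S \ J
    then cxD R S J (S \ J) else 0

/-- The ideal `I_S ⊂ R_S`. -/
def cxIdeal (R : Type) [CommRing R] (S : Finset ℕ) : Ideal (CxRing R S) :=
  Ideal.span (
    {x | ∃ J K J' K' : Finset ℕ,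
      (Disjoint J K ∧ J ∪ K = S ∧ 2 ≤ J.card ∧ 2 ≤ K.card) ∧
      (Disjoint J' K' ∧ J' ∪ K' = S ∧ 2 ≤ J'.card ∧ 2 ≤ K'.card) ∧
      NcapCx J J' K' ∧ x = cxD R S J K * cxD R S J' K'} ∪
    {x | ∃ a b c d : ℕ, a ∈ S ∧ b ∈ S ∧ c ∈ S ∧ d ∈ S ∧ a ≠ b ∧ c ≠ d ∧
      x = cxRel R S a b c d})

/-- The homomorphism `F : R_{[ℓ]} → R_{[ℓ+1]}`, `D_{J,K} ↦ D_{J∪{ℓ+1},K} + D_{J,K∪{ℓ+1}}`. -/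
def Fcx (R : Type) [CommRing R] (ℓ : ℕ) : CxRing R (Iset ℓ) →ₐ[R] CxRing R (Iset (ℓ + 1)) :=
  aeval fun i =>
    cxD R (Iset (ℓ + 1)) (i.1 ∪ {ℓ + 1}) (Iset ℓ \ i.1)
    + cxD R (Iset (ℓ + 1)) i.1 ((Iset ℓ \ i.1) ∪ {ℓ + 1})

/-- The homomorphism `F_P : R_{{nd}⊔B} → R_{[ℓ]}`, `D_{J',K'} ↦ D_{P∪(J'-{nd}),K'}` for
`nd ∈ J'`; here `nd = 0`. -/
def FJcx (R : Type) [CommRing R] (ℓ : ℕ) (P B : Finset ℕ) :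
    CxRing R (insert 0 B) →ₐ[R] CxRing R (Iset ℓ) :=
  aeval fun i => cxD R (Iset ℓ) (P ∪ i.1.erase 0) (insert 0 B \ i.1)

/-- The homomorphism `F_{J,K} : R_{{nd}⊔J} ⊗ R_{{nd}⊔K} → R_{[ℓ]}` acting by `F_K` on the
first factor and by `F_J` on the second. -/
def FJKcx (R : Type) [CommRing R] (ℓ : ℕ) (J K : Finset ℕ) :
    TensorProduct R (CxRing R (insert 0 J)) (CxRing R (insert 0 K)) →ₐ[R] CxRing R (Iset ℓ) :=
  Algebra.TensorProduct.productMap (FJcx R ℓ K J) (FJcx R ℓ J K)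

/-- The submodule `A ⊗ I_B + I_A ⊗ B` of `A ⊗_R B`. -/
def mixedSub (R : Type) [CommRing R] {A B : Type} [CommRing A] [CommRing B]
    [Algebra R A] [Algebra R B] (IA : Ideal A) (IB : Ideal B) :
    Submodule R (TensorProduct R A B) :=
  Submodule.span R
    ({x | ∃ p q, q ∈ IB ∧ x = p ⊗ₜ[R] q} ∪ {x | ∃ p q, p ∈ IA ∧ x = p ⊗ₜ[R] q})

/-! ### The "real" rings `R_{0,S}` with variables `ℝE_{J,K}`, `{J,K} ∈ P(S)`, and
`ℝD_{I;J,K}`, `(I,{J,K}) ∈ P̃•(S)`.  The unordered pair `{J,K}` is represented by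
its member whose minimum equals the minimum of `J ∪ K`. -/

abbrev EIdx (S : Finset ℕ) : Type := {J : Finset ℕ // J ⊆ S ∧ J.min = S.min}

abbrev DIdx (S : Finset ℕ) : Type :=
  {p : Finset ℕ × Finset ℕ //
    p.1 ⊆ S ∧ p.2 ⊆ S \ p.1 ∧ 1 ≤ p.1.card ∧ 2 ≤ (S \ p.1).card ∧ p.2.min = (S \ p.1).min}

/-- The polynomial ring `R_{0,S}`. -/
abbrev RRing (R : Type) [CommRing R] (S : Finset ℕ) : Type :=
  MvPolynomial (EIdx S ⊕ DIdx S) R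

def reXe (R : Type) [CommRing R] (S J : Finset ℕ) : RRing R S :=
  if h : J ⊆ S ∧ J.min = S.min then X (Sum.inl ⟨J, h⟩) else 0

/-- The variable `ℝE_{J,K}` of `R_{0,S}` (equal to `0` if `{J,K} ∉ P(S)`). -/
def reE (R : Type) [CommRing R] (S J K : Finset ℕ) : RRing R S :=
  if Disjoint J K ∧ J ∪ K = S then (if J.min ≤ K.min then reXe R S J else reXe R S K)
  else 0

def reXd (R : Type) [CommRing R] (S I J : Finset ℕ) : RRing R S :=
  if h : I ⊆ S ∧ J ⊆ S \ I ∧ 1 ≤ I.card ∧ 2 ≤ (S \ I).card ∧ J.min = (S \ I).min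
  then X (Sum.inr ⟨(I, J), h⟩) else 0

/-- The variable `ℝD_{I;J,K}` of `R_{0,S}` (equal to `0` if `(I,{J,K}) ∉ P̃•(S)`). -/
def reD (R : Type) [CommRing R] (S I J K : Finset ℕ) : RRing R S :=
  if Disjoint I (J ∪ K) ∧ Disjoint J K ∧ I ∪ (J ∪ K) = S then
    (if J.min ≤ K.min then reXd R S I J else reXd R S I K)
  else 0

/-- The sign `ε_{J,K}`: `1` if `min (J ∪ K) ∈ J` and `-1` otherwise. -/
def epsm (J K : Finset ℕ) : ℤ := if J.min ≤ K.min then 1 else -1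

/-- `{J,K} ⪯ {J',K'}`. -/
abbrev preceq (J K J' K' : Finset ℕ) : Prop := (J ⊆ J' ∧ K ⊆ K') ∨ (J ⊆ K' ∧ K ⊆ J')

/-- `{J,K} ∈ P(S)`. -/
abbrev validE (S J K : Finset ℕ) : Prop := Disjoint J K ∧ J ∪ K = S

/-- `(I,{J,K}) ∈ P̃•(S)`. -/
abbrev validD (S I J K : Finset ℕ) : Prop :=
  Disjoint I (J ∪ K) ∧ Disjoint J K ∧ I ∪ (J ∪ K) = S ∧ 1 ≤ I.card ∧ 2 ≤ (J ∪ K).card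

/-- The element `E^S_{abc}`. -/
def relE (R : Type) [CommRing R] (S : Finset ℕ) (a b c : ℕ) : RRing R S :=
  (∑ I ∈ S.powerset, ∑ J ∈ (S \ I).powerset,
    if 1 ≤ I.card ∧ 2 ≤ (S \ I).card ∧ a ∈ J ∧ b ∈ J ∧ c ∈ I
    then epsm J ((S \ I) \ J) • reD R S I J ((S \ I) \ J) else 0)
  - (∑ I ∈ S.powerset, ∑ J ∈ (S \ I).powerset,
    if 1 ≤ I.card ∧ 2 ≤ (S \ I).card ∧ a ∈ J ∧ c ∈ J ∧ b ∈ I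
    then epsm J ((S \ I) \ J) • reD R S I J ((S \ I) \ J) else 0)
  - ∑ I ∈ S.powerset, ∑ J ∈ (S \ I).powerset,
    if 1 ≤ I.card ∧ 2 ≤ (S \ I).card ∧ a ∈ I ∧ b ∈ J ∧ c ∈ (S \ I) \ J
    then epsm J ((S \ I) \ J) • reD R S I J ((S \ I) \ J) else 0

/-- The element `Σ_{{J,K} ∈ P(S)} ℝE_{J,K}`. -/
def relEsum (R : Type) [CommRing R] (S : Finset ℕ) : RRing R S :=
  ∑ J ∈ S.powerset.filter (fun J => J.min = S.min), reE R S J (S \ J)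

/-- The ideal `I_{0,S} ⊂ R_{0,S}`. -/
def reIdeal (R : Type) [CommRing R] (S : Finset ℕ) : Ideal (RRing R S) :=
  Ideal.span (
    {x | ∃ J K J' K' : Finset ℕ, validE S J K ∧ validE S J' K' ∧
      x = reE R S J K * reE R S J' K'} ∪
    {x | ∃ J K I' J' K' : Finset ℕ, validE S J K ∧ validD S I' J' K' ∧
      ¬ preceq J' K' J K ∧ x = reE R S J K * reD R S I' J' K'} ∪
    {x | ∃ I J K I' J' K' : Finset ℕ, validD S I J K ∧ validD S I' J' K' ∧
      ¬ preceq J K J' K' ∧ ¬ preceq J' K' J K ∧ ¬ J ∪ K ⊆ I' ∧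
      x = reD R S I J K * reD R S I' J' K'} ∪
    {relEsum R S} ∪
    {x | ∃ a b c : ℕ, a ∈ S ∧ b ∈ S ∧ c ∈ S ∧ a ≠ b ∧ a ≠ c ∧ b ≠ c ∧
      x = relE R S a b c})

/-- The element `G_{abc}` of Remark `RcM04rel_e2b2`. -/
def relG (R : Type) [CommRing R] (S : Finset ℕ) (a b c : ℕ) : RRing R S :=
  (∑ I ∈ S.powerset, ∑ J ∈ (S \ I).powerset,
    if 1 ≤ I.card ∧ 2 ≤ (S \ I).card ∧ a ∈ J ∧ b ∉ I ∧ c ∈ I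
    then epsm J ((S \ I) \ J) • reD R S I J ((S \ I) \ J) else 0)
  - ∑ I ∈ S.powerset, ∑ J ∈ (S \ I).powerset,
    if 1 ≤ I.card ∧ 2 ≤ (S \ I).card ∧ a ∈ J ∧ b ∈ I ∧ c ∉ I
    then epsm J ((S \ I) \ J) • reD R S I J ((S \ I) \ J) else 0

/-- The homomorphism `F : R_{0,[ℓ]} → R_{0,[ℓ+1]}`. -/
def Fre (R : Type) [CommRing R] (ℓ : ℕ) : RRing R (Iset ℓ) →ₐ[R] RRing R (Iset (ℓ + 1)) :=
  aeval fun ix =>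
    match ix with
    | Sum.inl e =>
        reE R (Iset (ℓ + 1)) (e.1 ∪ {ℓ + 1}) (Iset ℓ \ e.1)
        + reE R (Iset (ℓ + 1)) e.1 ((Iset ℓ \ e.1) ∪ {ℓ + 1})
    | Sum.inr d =>
        reD R (Iset (ℓ + 1)) (d.1.1 ∪ {ℓ + 1}) d.1.2 ((Iset ℓ \ d.1.1) \ d.1.2)
        + reD R (Iset (ℓ + 1)) d.1.1 (d.1.2 ∪ {ℓ + 1}) ((Iset ℓ \ d.1.1) \ d.1.2)
        + reD R (Iset (ℓ + 1)) d.1.1 d.1.2 (((Iset ℓ \ d.1.1) \ d.1.2) ∪ {ℓ + 1})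

/-- `ℝẼ⁰_{J,K} = ℝD_{{ℓ+1};J,K} ∈ R_{0,[ℓ+1]}`. -/
def reEt0 (R : Type) [CommRing R] (ℓ : ℕ) (J K : Finset ℕ) : RRing R (Iset (ℓ + 1)) :=
  reD R (Iset (ℓ + 1)) {ℓ + 1} J K

/-- `ℝẼ⁻_{J,K} = ℝE_{J,K∪{ℓ+1}} ∈ R_{0,[ℓ+1]}`. -/
def reEtm (R : Type) [CommRing R] (ℓ : ℕ) (J K : Finset ℕ) : RRing R (Iset (ℓ + 1)) :=
  reE R (Iset (ℓ + 1)) J (K ∪ {ℓ + 1})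

/-- `ℝD̃⁰_{I;J,K} ∈ R_{0,[ℓ+1]}` (for `(I,{J,K})` written with `min (J∪K) ∈ J`). -/
def reDt0 (R : Type) [CommRing R] (ℓ : ℕ) (I J K : Finset ℕ) : RRing R (Iset (ℓ + 1)) :=
  if 1 ∈ I then reD R (Iset (ℓ + 1)) I (J ∪ {ℓ + 1}) K
  else reD R (Iset (ℓ + 1)) (I ∪ {ℓ + 1}) J K

/-- `ℝD̃⁻_{I;J,K} = ℝD_{I;J,K∪{ℓ+1}} ∈ R_{0,[ℓ+1]}`. -/
def reDtm (R : Type) [CommRing R] (ℓ : ℕ) (I J K : Finset ℕ) : RRing R (Iset (ℓ + 1)) :=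
  reD R (Iset (ℓ + 1)) I J (K ∪ {ℓ + 1})

/-- The homomorphism `F_{J,K} : R^{cx}_{{nd}⊔[ℓ]} → R_{0,[ℓ]}`,
`D_{J',K'} ↦ (-1)^{|K|} ε_{J∩K',K∩K'} ℝD_{J'-{nd};J∩K',K∩K'}` for `nd ∈ J'`; here `nd = 0`. -/
def FJKre (R : Type) [CommRing R] (ℓ : ℕ) (J K : Finset ℕ) :
    CxRing R (insert 0 (Iset ℓ)) →ₐ[R] RRing R (Iset ℓ) :=
  aeval fun i =>
    ((-1 : ℤ) ^ K.card *
        epsm (J ∩ (insert 0 (Iset ℓ) \ i.1)) (K ∩ (insert 0 (Iset ℓ) \ i.1))) •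
      reD R (Iset ℓ) (i.1.erase 0)
        (J ∩ (insert 0 (Iset ℓ) \ i.1)) (K ∩ (insert 0 (Iset ℓ) \ i.1))

/-- The homomorphism `F²_{I;J,K} : R^{cx}_{{nd}⊔(J∪K)} → R_{0,[ℓ]}`,
`D_{J',K'} ↦ (-1)^{|K|} ε_{J∩K',K∩K'} ℝD_{I∪(J'-{nd});J∩K',K∩K'}` for `nd ∈ J'`;
here `nd = 0`. -/
def F2IJK (R : Type) [CommRing R] (ℓ : ℕ) (I J K : Finset ℕ) :
    CxRing R (insert 0 (J ∪ K)) →ₐ[R] RRing R (Iset ℓ) :=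
  aeval fun i =>
    ((-1 : ℤ) ^ K.card *
        epsm (J ∩ (insert 0 (J ∪ K) \ i.1)) (K ∩ (insert 0 (J ∪ K) \ i.1))) •
      reD R (Iset ℓ) (I ∪ i.1.erase 0)
        (J ∩ (insert 0 (J ∪ K) \ i.1)) (K ∩ (insert 0 (J ∪ K) \ i.1))

/-- `nd` for `{nd} ⊔ I`, identified with `min (ℤ⁺ - I)`. -/
def ndOf (I : Finset ℕ) : ℕ := sInf {n : ℕ | 0 < n ∧ n ∉ I}

/-- The homomorphism `F¹_{I;J,K} : R_{0,{nd}⊔I} → R_{0,[ℓ]}` with `nd = min (ℤ⁺ - I)`. -/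
def F1IJK (R : Type) [CommRing R] (ℓ : ℕ) (I J K : Finset ℕ) :
    RRing R (insert (ndOf I) I) →ₐ[R] RRing R (Iset ℓ) :=
  aeval fun ix =>
    match ix with
    | Sum.inl e =>
        if ndOf I ∈ e.1 then
          reE R (Iset ℓ) (J ∪ e.1.erase (ndOf I)) (K ∪ (insert (ndOf I) I \ e.1))
        else
          reE R (Iset ℓ) (J ∪ (insert (ndOf I) I \ e.1).erase (ndOf I)) (K ∪ e.1)
    | Sum.inr d =>
        if ndOf I ∈ d.1.1 then
          reD R (Iset ℓ) (d.1.1.erase (ndOf I) ∪ J ∪ K) d.1.2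
            ((insert (ndOf I) I \ d.1.1) \ d.1.2)
        else if ndOf I ∈ d.1.2 then
          reD R (Iset ℓ) d.1.1 (J ∪ d.1.2.erase (ndOf I))
            (K ∪ ((insert (ndOf I) I \ d.1.1) \ d.1.2))
        else
          reD R (Iset ℓ) d.1.1
            (J ∪ ((insert (ndOf I) I \ d.1.1) \ d.1.2).erase (ndOf I)) (K ∪ d.1.2)

/-- The homomorphism `F_{I;J,K} : R_{0,{nd}⊔I} ⊗ R^{cx}_{{nd}⊔(J∪K)} → R_{0,[ℓ]}`
induced by `F¹_{I;J,K}` and `F²_{I;J,K}`. -/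
def FIJK (R : Type) [CommRing R] (ℓ : ℕ) (I J K : Finset ℕ) :
    TensorProduct R (RRing R (insert (ndOf I) I)) (CxRing R (insert 0 (J ∪ K))) →ₐ[R]
      RRing R (Iset ℓ) :=
  Algebra.TensorProduct.productMap (F1IJK R ℓ I J K) (F2IJK R ℓ I J K)

/-- The ideal `I` of Statement 19, with `x₁,x₂,x₃,y₁,y₂,y₃` being `X 0,…,X 5`. -/
def tgtI19 : Ideal (MvPolynomial (Fin 6) ℚ) :=
  Ideal.span (
    {x | ∃ i j : Fin 6, i.val < 3 ∧ j.val < 3 ∧ x = X i * X j} ∪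
    {x | ∃ i j : Fin 6, 3 ≤ i.val ∧ 3 ≤ j.val ∧ x = X i * X j} ∪
    {x | ∃ i j : Fin 6, i.val < 3 ∧ 3 ≤ j.val ∧ i.val ≠ j.val - 3 ∧ x = X i * X j} ∪
    {X 0 * X 3 - X 1 * X 4, X 0 * X 3 - X 2 * X 5})

/-!
`R_{0,[3]}` has ten variables: the four `ℝE_{J,K}` and the six `ℝD_{I;J,K}` (where `|I| = 1`).
Write `ℝEᵢ = ℝE_{{i},[3]∖{i}}` and `ℝDᵢ = ℝD_{{i};[3]∖{i},∅}`. Modulo `I_{0,[3]}` the sum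
relation gives `ℝE_{∅,[3]} = -(ℝE₁ + ℝE₂ + ℝE₃)` and `E_{abc}` gives
`ℝD_{{a};{b},{c}} = ε_{b,c} (ℝD_c - ℝD_b)`, so the quotient is generated by the classes of the
`ℝEᵢ, ℝDᵢ`, and these satisfy the relations of `I`. Conversely, sending each variable to the
linear form in the `xᵢ` or in the `yᵢ` forced by these identities kills `I_{0,[3]}`: in
`ℚ[x,y]/I` one has `xᵢxⱼ = yᵢyⱼ = 0` and `xᵢyⱼ = δᵢⱼ x₁y₁`, so the product of an `x`-form and a
`y`-form vanishes when their coefficient vectors are orthogonal, and the monomial generators of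
`I_{0,[3]}` reduce to finitely many such orthogonality conditions, checked by `decide`.
-/

def pairRep (J K : Finset ℕ) : Finset ℕ := if J.min ≤ K.min then J else K

lemma pairRep_subset_and_min (J K : Finset ℕ) :
    pairRep J K ⊆ J ∪ K ∧ (pairRep J K).min = (J ∪ K).min := by
  rw [Finset.min_union, pairRep]
  split_ifs with h
  · exact ⟨Finset.subset_union_left, (inf_of_le_left h).symm⟩
  · exact ⟨Finset.subset_union_right, (inf_of_le_right (le_of_not_ge h)).symm⟩

lemma Finset.sum_sum_ite_eq_of_unique {α β M : Type*} [AddCommMonoid M] {s : Finset α}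
    {t : α → Finset β} {p : α → β → Prop} [∀ x y, Decidable (p x y)] {f : α → β → M}
    (x₀ : α) (y₀ : β) (h₀ : x₀ ∈ s ∧ y₀ ∈ t x₀ ∧ p x₀ y₀)
    (h : ∀ x ∈ s, ∀ y ∈ t x, p x y → x = x₀ ∧ y = y₀) :
    ∑ x ∈ s, ∑ y ∈ t x, (if p x y then f x y else 0) = f x₀ y₀ := by
  rw [Finset.sum_eq_single_of_mem x₀ h₀.1, Finset.sum_eq_single_of_mem y₀ h₀.2.1, if_pos h₀.2.2]
  · exact fun y hy hne => if_neg fun hp => hne (h _ h₀.1 _ hy hp).2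
  · exact fun x hx hne => Finset.sum_eq_zero fun y hy => if_neg fun hp => hne (h _ hx _ hy hp).1

section General

variable {R : Type} [CommRing R] {S : Finset ℕ}

lemma validE_sdiff {J : Finset ℕ} (h : J ⊆ S) : validE S J (S \ J) :=
  ⟨Finset.disjoint_sdiff, Finset.union_sdiff_of_subset h⟩

lemma reE_eq_reXe_pairRep {J K : Finset ℕ} (h : validE S J K) :
    reE R S J K = reXe R S (pairRep J K) := by
  rw [reE, if_pos h, pairRep, apply_ite (reXe R S)]

lemma reD_eq_reXd_pairRep {I J K : Finset ℕ} (h : validD S I J K) :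
    reD R S I J K = reXd R S I (pairRep J K) := by
  rw [reD, if_pos ⟨h.1, h.2.1, h.2.2.1⟩, pairRep, apply_ite (reXd R S I)]

lemma aeval_reE_of_validE {A : Type} [CommRing A] [Algebra R A] (fE : Finset ℕ → A)
    (fD : Finset ℕ → Finset ℕ → A) {J K : Finset ℕ} (h : validE S J K) :
    aeval (Sum.elim (fun e : EIdx S => fE e.1) (fun d : DIdx S => fD d.1.1 d.1.2))
      (reE R S J K) = fE (pairRep J K) := by
  obtain ⟨hsub, hmin⟩ := pairRep_subset_and_min J K
  rw [h.2] at hsub hmin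
  rw [reE_eq_reXe_pairRep h, reXe, dif_pos ⟨hsub, hmin⟩, aeval_X, Sum.elim_inl]

lemma aeval_reD_of_validD {A : Type} [CommRing A] [Algebra R A] (fE : Finset ℕ → A)
    (fD : Finset ℕ → Finset ℕ → A) {I J K : Finset ℕ} (h : validD S I J K) :
    aeval (Sum.elim (fun e : EIdx S => fE e.1) (fun d : DIdx S => fD d.1.1 d.1.2))
      (reD R S I J K) = fD I (pairRep J K) := by
  rw [reD_eq_reXd_pairRep h]
  obtain ⟨hdisj, -, hU, hI, hcard⟩ := h
  have hSI : S \ I = J ∪ K := by rw [← hU, Finset.union_sdiff_cancel_left hdisj]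
  obtain ⟨hsub, hmin⟩ := pairRep_subset_and_min J K
  rw [← hSI] at hsub hmin hcard
  rw [reXd, dif_pos ⟨hU ▸ Finset.subset_union_left, hsub, hI, hcard, hmin⟩, aeval_X, Sum.elim_inr]

lemma X_inl_eq_reE (e : EIdx S) : (X (Sum.inl e) : RRing R S) = reE R S e.1 (S \ e.1) := by
  obtain ⟨J, hJS, hmin⟩ := e
  have hle : J.min ≤ (S \ J).min := hmin ▸ Finset.min_mono Finset.sdiff_subset
  rw [reE, if_pos (validE_sdiff hJS), if_pos hle, reXe, dif_pos ⟨hJS, hmin⟩]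

lemma X_inr_eq_reD (d : DIdx S) :
    (X (Sum.inr d) : RRing R S) = reD R S d.1.1 d.1.2 ((S \ d.1.1) \ d.1.2) := by
  obtain ⟨⟨I, J⟩, hIS, hJ, hI, hcard, hmin⟩ := d
  have hle : J.min ≤ ((S \ I) \ J).min := hmin ▸ Finset.min_mono Finset.sdiff_subset
  have hJK : J ∪ (S \ I) \ J = S \ I := Finset.union_sdiff_of_subset hJ
  dsimp only
  rw [reD, if_pos ⟨by rw [hJK]; exact Finset.disjoint_sdiff, Finset.disjoint_sdiff,
    by rw [hJK, Finset.union_sdiff_of_subset hIS]⟩, if_pos hle, reXd,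
    dif_pos ⟨hIS, hJ, hI, hcard, hmin⟩]

local notation "π" => Ideal.Quotient.mk (reIdeal R S)

lemma mk_reE_mul_mk_reE {J K J' K' : Finset ℕ} (h : validE S J K) (h' : validE S J' K') :
    π (reE R S J K) * π (reE R S J' K') = 0 := by
  rw [← map_mul, Ideal.Quotient.eq_zero_iff_mem]
  exact Ideal.subset_span (Or.inl (Or.inl (Or.inl (Or.inl ⟨J, K, J', K', h, h', rfl⟩))))

lemma mk_reE_mul_mk_reD {J K I' J' K' : Finset ℕ} (h : validE S J K)
    (h' : validD S I' J' K') (hp : ¬ preceq J' K' J K) :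
    π (reE R S J K) * π (reD R S I' J' K') = 0 := by
  rw [← map_mul, Ideal.Quotient.eq_zero_iff_mem]
  exact Ideal.subset_span
    (Or.inl (Or.inl (Or.inl (Or.inr ⟨J, K, I', J', K', h, h', hp, rfl⟩))))

lemma mk_reD_mul_mk_reD {I J K I' J' K' : Finset ℕ} (h : validD S I J K)
    (h' : validD S I' J' K') (hp : ¬ preceq J K J' K') (hp' : ¬ preceq J' K' J K)
    (hs : ¬ J ∪ K ⊆ I') :
    π (reD R S I J K) * π (reD R S I' J' K') = 0 := by
  rw [← map_mul, Ideal.Quotient.eq_zero_iff_mem]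
  exact Ideal.subset_span
    (Or.inl (Or.inl (Or.inr ⟨I, J, K, I', J', K', h, h', hp, hp', hs, rfl⟩)))

lemma mk_relEsum : π (relEsum R S) = 0 :=
  Ideal.Quotient.eq_zero_iff_mem.mpr (Ideal.subset_span (Or.inl (Or.inr rfl)))

lemma mk_relE {a b c : ℕ} (ha : a ∈ S) (hb : b ∈ S) (hc : c ∈ S) (hab : a ≠ b) (hac : a ≠ c)
    (hbc : b ≠ c) : π (relE R S a b c) = 0 :=
  Ideal.Quotient.eq_zero_iff_mem.mpr
    (Ideal.subset_span (Or.inr ⟨a, b, c, ha, hb, hc, hab, hac, hbc, rfl⟩))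

end General

lemma epsm_mul_self (J K : Finset ℕ) : epsm J K * epsm J K = 1 := by
  unfold epsm
  split_ifs <;> rfl

lemma Iset_three_distinct_induction {P : ℕ → ℕ → ℕ → Prop} {a b c : ℕ} (ha : a ∈ Iset 3)
    (hb : b ∈ Iset 3) (hc : c ∈ Iset 3) (hab : a ≠ b) (hac : a ≠ c) (hbc : b ≠ c)
    (h₁ : P 1 2 3) (h₂ : P 1 3 2) (h₃ : P 2 1 3) (h₄ : P 2 3 1) (h₅ : P 3 1 2) (h₆ : P 3 2 1) :
    P a b c := by
  simp only [Iset, Finset.mem_Icc] at ha hb hc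
  obtain ⟨ha₁, ha₃⟩ := ha
  obtain ⟨hb₁, hb₃⟩ := hb
  obtain ⟨hc₁, hc₃⟩ := hc
  interval_cases a <;> interval_cases b <;> interval_cases c <;> simp_all

/-- On `[3]` each of the three sums in `E_{abc}` has a single term. -/
lemma relE_Iset_three {R : Type} [CommRing R] {a b c : ℕ} (ha : a ∈ Iset 3) (hb : b ∈ Iset 3)
    (hc : c ∈ Iset 3) (hab : a ≠ b) (hac : a ≠ c) (hbc : b ≠ c) :
    relE R (Iset 3) a b c = reD R (Iset 3) {c} (Iset 3 \ {c}) ∅ -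
      reD R (Iset 3) {b} (Iset 3 \ {b}) ∅ - epsm {b} {c} • reD R (Iset 3) {a} {b} {c} := by
  obtain ⟨hc', hb', ha'⟩ : Iset 3 \ {c} = {a, b} ∧ Iset 3 \ {b} = {a, c} ∧
      (Iset 3 \ {a}) \ {b} = {c} := by
    apply Iset_three_distinct_induction ha hb hc hab hac hbc <;> decide
  rw [relE, Finset.sum_sum_ite_eq_of_unique {c} {a, b},
    Finset.sum_sum_ite_eq_of_unique {b} {a, c}, Finset.sum_sum_ite_eq_of_unique {a} {b},
    ha', hb', hc']
  · simp [epsm]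
  all_goals apply Iset_three_distinct_induction ha hb hc hab hac hbc <;> decide

lemma relEsum_Iset_three {R : Type} [CommRing R] : relEsum R (Iset 3) =
    reE R (Iset 3) {1} (Iset 3 \ {1}) + reE R (Iset 3) {1, 2} (Iset 3 \ {1, 2}) +
      reE R (Iset 3) {1, 3} (Iset 3 \ {1, 3}) + reE R (Iset 3) {1, 2, 3} (Iset 3 \ {1, 2, 3}) := by
  rw [relEsum, show (Iset 3).powerset.filter (fun J => J.min = (Iset 3).min) =
    {{1}, {1, 2}, {1, 3}, {1, 2, 3}} by decide, Finset.sum_insert (by decide),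
    Finset.sum_insert (by decide), Finset.sum_insert (by decide), Finset.sum_singleton]
  abel

namespace ThreePoint

local notation "π" => Ideal.Quotient.mk (reIdeal ℚ (Iset 3))

local notation "π'" => Ideal.Quotient.mk tgtI19

lemma mk_X_mul_mk_X_of_lt_of_lt {i j : Fin 6} (hi : (i : ℕ) < 3) (hj : (j : ℕ) < 3) :
    π' (X i) * π' (X j) = 0 := by
  rw [← map_mul, Ideal.Quotient.eq_zero_iff_mem]
  exact Ideal.subset_span (Or.inl (Or.inl (Or.inl ⟨i, j, hi, hj, rfl⟩)))

lemma mk_X_mul_mk_X_of_ge_of_ge {i j : Fin 6} (hi : 3 ≤ (i : ℕ)) (hj : 3 ≤ (j : ℕ)) :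
    π' (X i) * π' (X j) = 0 := by
  rw [← map_mul, Ideal.Quotient.eq_zero_iff_mem]
  exact Ideal.subset_span (Or.inl (Or.inl (Or.inr ⟨i, j, hi, hj, rfl⟩)))

lemma mk_X_mul_mk_X_of_lt_of_ge {i j : Fin 6} (hi : (i : ℕ) < 3) (hj : 3 ≤ (j : ℕ))
    (hij : (i : ℕ) ≠ j - 3) : π' (X i) * π' (X j) = 0 := by
  rw [← map_mul, Ideal.Quotient.eq_zero_iff_mem]
  exact Ideal.subset_span (Or.inl (Or.inr ⟨i, j, hi, hj, hij, rfl⟩))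

lemma mk_X_one_mul_mk_X_four : π' (X 1) * π' (X 4) = π' (X 0) * π' (X 3) := by
  rw [← map_mul, ← map_mul, eq_comm, Ideal.Quotient.eq]
  exact Ideal.subset_span (Or.inr (Set.mem_insert _ _))

lemma mk_X_two_mul_mk_X_five : π' (X 2) * π' (X 5) = π' (X 0) * π' (X 3) := by
  rw [← map_mul, ← map_mul, eq_comm, Ideal.Quotient.eq]
  exact Ideal.subset_span (Or.inr (Set.mem_insert_of_mem _ rfl))

def xVar : Fin 3 → MvPolynomial (Fin 6) ℚ ⧸ tgtI19 := ![π' (X 0), π' (X 1), π' (X 2)]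

def yVar : Fin 3 → MvPolynomial (Fin 6) ℚ ⧸ tgtI19 := ![π' (X 3), π' (X 4), π' (X 5)]

def diagClass : MvPolynomial (Fin 6) ℚ ⧸ tgtI19 := π' (X 0) * π' (X 3)

lemma xVar_mul_xVar (i j : Fin 3) : xVar i * xVar j = 0 := by
  fin_cases i <;> fin_cases j <;> exact mk_X_mul_mk_X_of_lt_of_lt (by decide) (by decide)

lemma yVar_mul_yVar (i j : Fin 3) : yVar i * yVar j = 0 := by
  fin_cases i <;> fin_cases j <;> exact mk_X_mul_mk_X_of_ge_of_ge (by decide) (by decide)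

lemma xVar_mul_yVar (i j : Fin 3) : xVar i * yVar j = if i = j then diagClass else 0 := by
  fin_cases i <;> fin_cases j
  all_goals first
    | exact mk_X_mul_mk_X_of_lt_of_ge (by decide) (by decide) (by decide)
    | rfl
    | exact mk_X_one_mul_mk_X_four
    | exact mk_X_two_mul_mk_X_five

def xForm : (Fin 3 → ℤ) →ₗ[ℤ] MvPolynomial (Fin 6) ℚ ⧸ tgtI19 :=
  Fintype.linearCombination ℤ xVar

def yForm : (Fin 3 → ℤ) →ₗ[ℤ] MvPolynomial (Fin 6) ℚ ⧸ tgtI19 :=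
  Fintype.linearCombination ℤ yVar

lemma xForm_apply (a : Fin 3 → ℤ) : xForm a = a 0 • xVar 0 + a 1 • xVar 1 + a 2 • xVar 2 := by
  simp [xForm, Fintype.linearCombination_apply, Fin.sum_univ_three]

lemma yForm_apply (b : Fin 3 → ℤ) : yForm b = b 0 • yVar 0 + b 1 • yVar 1 + b 2 • yVar 2 := by
  simp [yForm, Fintype.linearCombination_apply, Fin.sum_univ_three]

lemma xForm_mul_xForm (a b : Fin 3 → ℤ) : xForm a * xForm b = 0 := by
  simp only [xForm, Fintype.linearCombination_apply, Finset.sum_mul_sum, smul_mul_smul_comm,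
    xVar_mul_xVar, smul_zero, Finset.sum_const_zero]

lemma yForm_mul_yForm (a b : Fin 3 → ℤ) : yForm a * yForm b = 0 := by
  simp only [yForm, Fintype.linearCombination_apply, Finset.sum_mul_sum, smul_mul_smul_comm,
    yVar_mul_yVar, smul_zero, Finset.sum_const_zero]

lemma xForm_mul_yForm (a b : Fin 3 → ℤ) : xForm a * yForm b = (a ⬝ᵥ b) • diagClass := by
  simp only [xForm, yForm, Fintype.linearCombination_apply, Finset.sum_mul_sum,
    smul_mul_smul_comm, xVar_mul_yVar, smul_ite, smul_zero, Finset.sum_ite_eq, Finset.mem_univ,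
    if_true, dotProduct, Finset.sum_smul]

/- Coefficient vectors, in `x` resp. `y`, of the images of the variables, which are indexed by
the member of the pair containing the minimum: `ℝE_{{i},[3]∖{i}} ↦ xᵢ`,
`ℝE_{∅,[3]} ↦ -(x₁ + x₂ + x₃)`, `ℝD_{{i};[3]∖{i},∅} ↦ yᵢ` and `ℝD_{{a};{b},{c}} ↦ y_c - y_b`
for `b < c`. -/
def gE (J : Finset ℕ) : Fin 3 → ℤ :=
  if J = {1} then ![1, 0, 0] else if J = {1, 3} then ![0, 1, 0]
  else if J = {1, 2} then ![0, 0, 1] else ![-1, -1, -1]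

def gD (I J : Finset ℕ) : Fin 3 → ℤ :=
  if I = {1} then (if J = {2, 3} then ![1, 0, 0] else ![0, -1, 1])
  else if I = {2} then (if J = {1, 3} then ![0, 1, 0] else ![-1, 0, 1])
  else (if J = {1, 2} then ![0, 0, 1] else ![-1, 1, 0])

def fwdVal : EIdx (Iset 3) ⊕ DIdx (Iset 3) → MvPolynomial (Fin 6) ℚ ⧸ tgtI19 :=
  Sum.elim (fun e => xForm (gE e.1)) (fun d => yForm (gD d.1.1 d.1.2))

lemma aeval_fwdVal_reE {J K : Finset ℕ} (h : validE (Iset 3) J K) :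
    aeval fwdVal (reE ℚ (Iset 3) J K) = xForm (gE (pairRep J K)) := by
  rw [fwdVal]
  exact aeval_reE_of_validE (fun J => xForm (gE J)) (fun I J => yForm (gD I J)) h

lemma aeval_fwdVal_reD {I J K : Finset ℕ} (h : validD (Iset 3) I J K) :
    aeval fwdVal (reD ℚ (Iset 3) I J K) = yForm (gD I (pairRep J K)) := by
  rw [fwdVal]
  exact aeval_reD_of_validD (fun J => xForm (gE J)) (fun I J => yForm (gD I J)) h

lemma gE_dotProduct_gD {J K I' J' K' : Finset ℕ} (h : validE (Iset 3) J K)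
    (h' : validD (Iset 3) I' J' K') (hp : ¬ preceq J' K' J K) :
    gE (pairRep J K) ⬝ᵥ gD I' (pairRep J' K') = 0 := by
  obtain rfl : K = Iset 3 \ J := by rw [← h.2, Finset.union_sdiff_cancel_left h.1]
  have hSI : Iset 3 \ I' = J' ∪ K' := by rw [← h'.2.2.1, Finset.union_sdiff_cancel_left h'.1]
  obtain rfl : K' = (Iset 3 \ I') \ J' := by rw [hSI, Finset.union_sdiff_cancel_left h'.2.1]
  have key : ∀ J ∈ (Iset 3).powerset, ∀ I ∈ (Iset 3).powerset, ∀ J' ∈ (Iset 3 \ I).powerset,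
      validD (Iset 3) I J' ((Iset 3 \ I) \ J') →
      ¬ preceq J' ((Iset 3 \ I) \ J') J (Iset 3 \ J) →
      gE (pairRep J (Iset 3 \ J)) ⬝ᵥ gD I (pairRep J' ((Iset 3 \ I) \ J')) = 0 := by
    decide
  exact key J (Finset.mem_powerset.2 (h.2 ▸ Finset.subset_union_left)) I'
    (Finset.mem_powerset.2 (h'.2.2.1 ▸ Finset.subset_union_left))
    J' (Finset.mem_powerset.2 (hSI ▸ Finset.subset_union_left)) h' hp

lemma sum_gE_pairRep : ∑ J ∈ (Iset 3).powerset.filter (fun J => J.min = (Iset 3).min),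
    gE (pairRep J (Iset 3 \ J)) = 0 := by
  decide

lemma aeval_fwdVal_relEsum : aeval fwdVal (relEsum ℚ (Iset 3)) = 0 := by
  rw [relEsum, map_sum, Finset.sum_congr rfl fun J hJ => aeval_fwdVal_reE
    (validE_sdiff (Finset.mem_powerset.1 (Finset.mem_filter.1 hJ).1)), ← map_sum,
    sum_gE_pairRep, map_zero]

lemma aeval_fwdVal_relE {a b c : ℕ} (ha : a ∈ Iset 3) (hb : b ∈ Iset 3) (hc : c ∈ Iset 3)
    (hab : a ≠ b) (hac : a ≠ c) (hbc : b ≠ c) : aeval fwdVal (relE ℚ (Iset 3) a b c) = 0 := by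
  rw [relE_Iset_three ha hb hc hab hac hbc, map_sub, map_sub, map_zsmul, aeval_fwdVal_reD,
    aeval_fwdVal_reD, aeval_fwdVal_reD, ← map_zsmul, ← map_sub, ← map_sub]
  · refine (congrArg yForm ?_).trans (map_zero yForm)
    apply Iset_three_distinct_induction ha hb hc hab hac hbc <;> decide
  all_goals apply Iset_three_distinct_induction ha hb hc hab hac hbc <;> decide

lemma aeval_fwdVal_eq_zero_of_mem {x : RRing ℚ (Iset 3)} (hx : x ∈ reIdeal ℚ (Iset 3)) :
    aeval fwdVal x = 0 := by
  refine (Ideal.span_le (I := RingHom.ker (aeval fwdVal)) |>.2 ?_) hx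
  rintro _ ((((⟨J, K, J', K', h, h', rfl⟩ | ⟨J, K, I', J', K', h, h', hp, rfl⟩) |
    ⟨I, J, K, I', J', K', h, h', -, -, -, rfl⟩) | rfl) | ⟨a, b, c, ha, hb, hc, hab, hac, hbc, rfl⟩)
  · rw [SetLike.mem_coe, RingHom.mem_ker, map_mul, aeval_fwdVal_reE h, aeval_fwdVal_reE h',
      xForm_mul_xForm]
  · rw [SetLike.mem_coe, RingHom.mem_ker, map_mul, aeval_fwdVal_reE h, aeval_fwdVal_reD h',
      xForm_mul_yForm, gE_dotProduct_gD h h' hp, zero_smul]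
  · rw [SetLike.mem_coe, RingHom.mem_ker, map_mul, aeval_fwdVal_reD h, aeval_fwdVal_reD h',
      yForm_mul_yForm]
  · exact aeval_fwdVal_relEsum
  · exact aeval_fwdVal_relE ha hb hc hab hac hbc

def fwd : (RRing ℚ (Iset 3) ⧸ reIdeal ℚ (Iset 3)) →ₐ[ℚ] MvPolynomial (Fin 6) ℚ ⧸ tgtI19 :=
  Ideal.Quotient.liftₐ _ (aeval fwdVal) fun _ => aeval_fwdVal_eq_zero_of_mem

lemma fwd_mk (x : RRing ℚ (Iset 3)) : fwd (π x) = aeval fwdVal x := rfl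

lemma fwd_mk_reE {J K : Finset ℕ} (h : validE (Iset 3) J K) :
    fwd (π (reE ℚ (Iset 3) J K)) = xForm (gE (pairRep J K)) :=
  aeval_fwdVal_reE h

lemma fwd_mk_reD {I J K : Finset ℕ} (h : validD (Iset 3) I J K) :
    fwd (π (reD ℚ (Iset 3) I J K)) = yForm (gD I (pairRep J K)) :=
  aeval_fwdVal_reD h

abbrev eCls (J : Finset ℕ) : RRing ℚ (Iset 3) ⧸ reIdeal ℚ (Iset 3) :=
  π (reE ℚ (Iset 3) J (Iset 3 \ J))

abbrev dCls (k : ℕ) : RRing ℚ (Iset 3) ⧸ reIdeal ℚ (Iset 3) :=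
  π (reD ℚ (Iset 3) {k} (Iset 3 \ {k}) ∅)

lemma eCls_add_eq_zero : eCls {1} + eCls {1, 2} + eCls {1, 3} + eCls {1, 2, 3} = 0 := by
  rw [← mk_relEsum (R := ℚ) (S := Iset 3), relEsum_Iset_three]
  simp only [map_add]

lemma mk_reD_eq_epsm_smul {a b c : ℕ} (ha : a ∈ Iset 3) (hb : b ∈ Iset 3) (hc : c ∈ Iset 3)
    (hab : a ≠ b) (hac : a ≠ c) (hbc : b ≠ c) :
    π (reD ℚ (Iset 3) {a} {b} {c}) = epsm {b} {c} • (dCls c - dCls b) := by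
  have hrel := mk_relE (R := ℚ) ha hb hc hab hac hbc
  rw [relE_Iset_three ha hb hc hab hac hbc, map_sub, map_sub, map_zsmul] at hrel
  have hε := congrArg (Int.cast : ℤ → RRing ℚ (Iset 3) ⧸ reIdeal ℚ (Iset 3))
    (epsm_mul_self {b} {c})
  push_cast at hε
  rw [zsmul_eq_mul] at hrel ⊢
  linear_combination (-(epsm {b} {c} : RRing ℚ (Iset 3) ⧸ reIdeal ℚ (Iset 3))) * hrel -
    π (reD ℚ (Iset 3) {a} {b} {c}) * hε

lemma dCls_mul_self {c : ℕ} (hc : c ∈ Iset 3) : dCls c * dCls c = 0 := by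
  obtain ⟨a, ha, b, hb, hab, hac, hbc⟩ := (by decide : ∀ c ∈ Iset 3, ∃ a ∈ Iset 3,
    ∃ b ∈ Iset 3, a ≠ b ∧ a ≠ c ∧ b ≠ c) c hc
  have hrel := mk_relE (R := ℚ) ha hb hc hab hac hbc
  rw [relE_Iset_three ha hb hc hab hac hbc, map_sub, map_sub, map_zsmul] at hrel
  have h₁ : dCls c * dCls b = 0 := by
    apply mk_reD_mul_mk_reD <;>
      apply Iset_three_distinct_induction ha hb hc hab hac hbc <;> decide
  have h₂ : dCls c * π (reD ℚ (Iset 3) {a} {b} {c}) = 0 := by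
    apply mk_reD_mul_mk_reD <;>
      apply Iset_three_distinct_induction ha hb hc hab hac hbc <;> decide
  linear_combination dCls c * hrel + h₁ +
    (epsm {b} {c} : RRing ℚ (Iset 3) ⧸ reIdeal ℚ (Iset 3)) * h₂

-- The sum relation gives `ℝE_{∅,[3]} ℝD_k = -ℝE_k ℝD_k`, and `E_{abc}` gives
-- `ℝE_{∅,[3]} ℝD_c = ℝE_{∅,[3]} ℝD_b` because `ℝE_{∅,[3]} ℝD_{{a};{b},{c}} = 0`.
lemma eCls_mul_dCls_one_eq_two : eCls {1} * dCls 1 = eCls {1, 3} * dCls 2 := by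
  have hrel := mk_relE (R := ℚ) (S := Iset 3) (a := 3) (b := 1) (c := 2) (by decide)
    (by decide) (by decide) (by decide) (by decide) (by decide)
  rw [relE_Iset_three (by decide) (by decide) (by decide) (by decide) (by decide) (by decide),
    map_sub, map_sub, map_zsmul] at hrel
  have h₁ : eCls {1, 3} * dCls 1 = 0 := mk_reE_mul_mk_reD (by decide) (by decide) (by decide)
  have h₂ : eCls {1, 2} * dCls 1 = 0 := mk_reE_mul_mk_reD (by decide) (by decide) (by decide)
  have h₃ : eCls {1} * dCls 2 = 0 := mk_reE_mul_mk_reD (by decide) (by decide) (by decide)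
  have h₄ : eCls {1, 2} * dCls 2 = 0 := mk_reE_mul_mk_reD (by decide) (by decide) (by decide)
  have h₅ : eCls {1, 2, 3} * π (reD ℚ (Iset 3) {3} {1} {2}) = 0 :=
    mk_reE_mul_mk_reD (by decide) (by decide) (by decide)
  linear_combination dCls 1 * eCls_add_eq_zero - dCls 2 * eCls_add_eq_zero - h₁ - h₂ + h₃ + h₄ +
    eCls {1, 2, 3} * hrel + (epsm {1} {2} : RRing ℚ (Iset 3) ⧸ reIdeal ℚ (Iset 3)) * h₅

lemma eCls_mul_dCls_one_eq_three : eCls {1} * dCls 1 = eCls {1, 2} * dCls 3 := by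
  have hrel := mk_relE (R := ℚ) (S := Iset 3) (a := 2) (b := 1) (c := 3) (by decide)
    (by decide) (by decide) (by decide) (by decide) (by decide)
  rw [relE_Iset_three (by decide) (by decide) (by decide) (by decide) (by decide) (by decide),
    map_sub, map_sub, map_zsmul] at hrel
  have h₁ : eCls {1, 3} * dCls 1 = 0 := mk_reE_mul_mk_reD (by decide) (by decide) (by decide)
  have h₂ : eCls {1, 2} * dCls 1 = 0 := mk_reE_mul_mk_reD (by decide) (by decide) (by decide)
  have h₃ : eCls {1} * dCls 3 = 0 := mk_reE_mul_mk_reD (by decide) (by decide) (by decide)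
  have h₄ : eCls {1, 3} * dCls 3 = 0 := mk_reE_mul_mk_reD (by decide) (by decide) (by decide)
  have h₅ : eCls {1, 2, 3} * π (reD ℚ (Iset 3) {2} {1} {3}) = 0 :=
    mk_reE_mul_mk_reD (by decide) (by decide) (by decide)
  linear_combination dCls 1 * eCls_add_eq_zero - dCls 3 * eCls_add_eq_zero - h₁ - h₂ + h₃ + h₄ +
    eCls {1, 2, 3} * hrel + (epsm {1} {3} : RRing ℚ (Iset 3) ⧸ reIdeal ℚ (Iset 3)) * h₅

def bwdVal : Fin 6 → RRing ℚ (Iset 3) ⧸ reIdeal ℚ (Iset 3) :=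
  ![eCls {1}, eCls {1, 3}, eCls {1, 2}, dCls 1, dCls 2, dCls 3]

lemma aeval_bwdVal_eq_zero_of_mem {p : MvPolynomial (Fin 6) ℚ} (hp : p ∈ tgtI19) :
    aeval bwdVal p = 0 := by
  refine (Ideal.span_le (I := RingHom.ker (aeval bwdVal)) |>.2 ?_) hp
  rintro _ (((⟨i, j, hi, hj, rfl⟩ | ⟨i, j, hi, hj, rfl⟩) | ⟨i, j, hi, hj, hij, rfl⟩) | (rfl | rfl)) <;>
    simp only [SetLike.mem_coe, RingHom.mem_ker, map_mul, map_sub, aeval_X]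
  · fin_cases i <;> fin_cases j <;>
      simp only [bwdVal, Fin.reduceFinMk, Matrix.cons_val] at hi hj ⊢ <;>
      (try omega) <;> exact mk_reE_mul_mk_reE (by decide) (by decide)
  · fin_cases i <;> fin_cases j <;>
      simp only [bwdVal, Fin.reduceFinMk, Matrix.cons_val] at hi hj ⊢ <;>
      (try omega) <;> first
      | exact mk_reD_mul_mk_reD (by decide) (by decide) (by decide) (by decide) (by decide)
      | exact dCls_mul_self (by decide)
  · fin_cases i <;> fin_cases j <;>
      simp only [bwdVal, Fin.reduceFinMk, Matrix.cons_val] at hi hj hij ⊢ <;>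
      (try omega) <;> exact mk_reE_mul_mk_reD (by decide) (by decide) (by decide)
  · exact sub_eq_zero.2 eCls_mul_dCls_one_eq_two
  · exact sub_eq_zero.2 eCls_mul_dCls_one_eq_three

def bwd : (MvPolynomial (Fin 6) ℚ ⧸ tgtI19) →ₐ[ℚ] RRing ℚ (Iset 3) ⧸ reIdeal ℚ (Iset 3) :=
  Ideal.Quotient.liftₐ _ (aeval bwdVal) fun _ => aeval_bwdVal_eq_zero_of_mem

lemma bwd_mk (p : MvPolynomial (Fin 6) ℚ) : bwd (π' p) = aeval bwdVal p := rfl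

lemma bwd_xForm (a : Fin 3 → ℤ) :
    bwd (xForm a) = a 0 • eCls {1} + a 1 • eCls {1, 3} + a 2 • eCls {1, 2} := by
  simp [xForm_apply, xVar, bwd_mk, bwdVal]

lemma bwd_yForm (b : Fin 3 → ℤ) :
    bwd (yForm b) = b 0 • dCls 1 + b 1 • dCls 2 + b 2 • dCls 3 := by
  simp [yForm_apply, yVar, bwd_mk, bwdVal]

lemma fwd_bwdVal (j : Fin 6) : fwd (bwdVal j) = π' (X j) := by
  fin_cases j <;>
    simp +decide only [bwdVal, Fin.reduceFinMk, Matrix.cons_val, fwd_mk_reE, fwd_mk_reD, gE, gD,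
      ↓reduceIte, xForm_apply, yForm_apply, one_smul, zero_smul, add_zero, zero_add, xVar, yVar]

lemma bwd_fwdVal_inl (e : EIdx (Iset 3)) : bwd (fwdVal (Sum.inl e)) = π (X (Sum.inl e)) := by
  obtain ⟨J, hJ⟩ := e
  have key : ∀ J ∈ (Iset 3).powerset, J.min = (Iset 3).min →
      J ∈ ({{1}, {1, 2}, {1, 3}, {1, 2, 3}} : Finset (Finset ℕ)) := by
    decide
  have hJ' := key J (Finset.mem_powerset.2 hJ.1) hJ.2
  rw [X_inl_eq_reE]
  simp only [fwdVal, Sum.elim_inl, bwd_xForm]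
  fin_cases hJ' <;> simp +decide only [gE, ↓reduceIte, Matrix.cons_val, one_smul, zero_smul,
    add_zero, zero_add]
  -- only `J = {1, 2, 3}` is left
  linear_combination (-1 : RRing ℚ (Iset 3) ⧸ reIdeal ℚ (Iset 3)) * eCls_add_eq_zero

lemma bwd_fwdVal_inr (d : DIdx (Iset 3)) : bwd (fwdVal (Sum.inr d)) = π (X (Sum.inr d)) := by
  obtain ⟨⟨I, J⟩, hIS, hJ, hI, hcard, hmin⟩ := d
  have key : ∀ I ∈ (Iset 3).powerset, ∀ J ∈ (Iset 3 \ I).powerset, 1 ≤ #I →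
      2 ≤ #(Iset 3 \ I) → J.min = (Iset 3 \ I).min → (I, J, (Iset 3 \ I) \ J) ∈
        ({({1}, Iset 3 \ {1}, ∅), ({1}, {2}, {3}), ({2}, Iset 3 \ {2}, ∅), ({2}, {1}, {3}),
          ({3}, Iset 3 \ {3}, ∅), ({3}, {1}, {2})} :
          Finset (Finset ℕ × Finset ℕ × Finset ℕ)) := by
    decide
  have hIJ := key I (Finset.mem_powerset.2 hIS) J (Finset.mem_powerset.2 hJ) hI hcard hmin
  rw [X_inr_eq_reD]
  simp only [fwdVal, Sum.elim_inr, bwd_yForm]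
  simp only [Finset.mem_insert, Finset.mem_singleton, Prod.mk.injEq] at hIJ
  rcases hIJ with ⟨rfl, rfl, hK⟩ | ⟨rfl, rfl, hK⟩ | ⟨rfl, rfl, hK⟩ | ⟨rfl, rfl, hK⟩ |
    ⟨rfl, rfl, hK⟩ | ⟨rfl, rfl, hK⟩ <;> rw [hK] <;>
    simp +decide only [gD, ↓reduceIte, Matrix.cons_val, one_smul, zero_smul, add_zero, zero_add]
  all_goals rw [mk_reD_eq_epsm_smul (by decide) (by decide) (by decide) (by decide) (by decide)
    (by decide)]
  all_goals simp +decide only [epsm, ↓reduceIte, one_smul]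
  all_goals abel

lemma fwd_comp_bwd : fwd.comp bwd = AlgHom.id ℚ _ := by
  refine Ideal.Quotient.algHom_ext ℚ (MvPolynomial.algHom_ext fun j => ?_)
  simpa only [AlgHom.comp_apply, Ideal.Quotient.mkₐ_eq_mk, bwd_mk, aeval_X, AlgHom.id_apply]
    using fwd_bwdVal j

lemma bwd_comp_fwd : bwd.comp fwd = AlgHom.id ℚ _ := by
  refine Ideal.Quotient.algHom_ext ℚ (MvPolynomial.algHom_ext fun v => ?_)
  simp only [AlgHom.comp_apply, Ideal.Quotient.mkₐ_eq_mk, fwd_mk, aeval_X, AlgHom.id_apply]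
  rcases v with e | d
  · exact bwd_fwdVal_inl e
  · exact bwd_fwdVal_inr d

def quotEquiv : (RRing ℚ (Iset 3) ⧸ reIdeal ℚ (Iset 3)) ≃ₐ[ℚ] MvPolynomial (Fin 6) ℚ ⧸ tgtI19 :=
  AlgEquiv.ofAlgHom fwd bwd fwd_comp_bwd bwd_comp_fwd

lemma quotEquiv_mk (x : RRing ℚ (Iset 3)) : quotEquiv (π x) = fwd (π x) := rfl

end ThreePoint

/-- `R_{0,[3]}/I_{0,[3]} ≅ ℚ[x₁,x₂,x₃,y₁,y₂,y₃]/I` via an isomorphism sending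
the classes of `ℝE_{{i},…}` and `ℝD_{{i};…,∅}` to the classes of `xᵢ` and `yᵢ`. -/
theorem stmt19 :
    ∃ e : (RRing ℚ (Iset 3) ⧸ reIdeal ℚ (Iset 3)) ≃ₐ[ℚ]
        (MvPolynomial (Fin 6) ℚ ⧸ tgtI19),
      e (Ideal.Quotient.mk (reIdeal ℚ (Iset 3)) (reE ℚ (Iset 3) {1} {2, 3})) =
          Ideal.Quotient.mk tgtI19 (X 0) ∧
      e (Ideal.Quotient.mk (reIdeal ℚ (Iset 3)) (reE ℚ (Iset 3) {2} {1, 3})) =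
          Ideal.Quotient.mk tgtI19 (X 1) ∧
      e (Ideal.Quotient.mk (reIdeal ℚ (Iset 3)) (reE ℚ (Iset 3) {3} {1, 2})) =
          Ideal.Quotient.mk tgtI19 (X 2) ∧
      e (Ideal.Quotient.mk (reIdeal ℚ (Iset 3)) (reD ℚ (Iset 3) {1} {2, 3} ∅)) =
          Ideal.Quotient.mk tgtI19 (X 3) ∧
      e (Ideal.Quotient.mk (reIdeal ℚ (Iset 3)) (reD ℚ (Iset 3) {2} {1, 3} ∅)) =
          Ideal.Quotient.mk tgtI19 (X 4) ∧
      e (Ideal.Quotient.mk (reIdeal ℚ (Iset 3)) (reD ℚ (Iset 3) {3} {1, 2} ∅)) =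
          Ideal.Quotient.mk tgtI19 (X 5) := by
  refine ⟨ThreePoint.quotEquiv, ?_, ?_, ?_, ?_, ?_, ?_⟩ <;>
    simp +decide only [ThreePoint.quotEquiv_mk, ThreePoint.fwd_mk_reE, ThreePoint.fwd_mk_reD,
      ThreePoint.gE, ThreePoint.gD, ↓reduceIte, ThreePoint.xForm_apply, ThreePoint.yForm_apply,
      ThreePoint.xVar, ThreePoint.yVar, Matrix.cons_val, one_smul, zero_smul, add_zero, zero_add]

end
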